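/- Let X = ℝ³ with the 3-norm and J its duality map. Let u = (0,−1,1) and v = (−1,1,0). Then Ju = (0,−1,1)/∛2 and Jv = (−1,1,0)/∛2, and the convex combination ψ = (1/4)Ju + (3/4)Jv = (−3,2,1)/(4∛2) does not lie in the image J([v,u]) of the segment [v,u] = {tv+(1−t)u : t ∈ [0,1]}. Hence J([v,u]) is not a segment in X*. -/

import Mathlib

/-- The 3-norm on ℝ³. -/
noncomputable def norm3 (z : ℝ × ℝ × ℝ) : ℝ :=
  (|z.1| ^ 3 + |z.2.1| ^ 3 + |z.2.2| ^ 3) ^ ((1 : ℝ) / 3)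

/-- The 3/2-norm on the dual of (ℝ³, ‖·‖₃). -/
noncomputable def norm32 (ψ : ℝ × ℝ × ℝ) : ℝ :=
  (|ψ.1| ^ ((3 : ℝ) / 2) + |ψ.2.1| ^ ((3 : ℝ) / 2) + |ψ.2.2| ^ ((3 : ℝ) / 2)) ^ ((2 : ℝ) / 3)

/-- The normalized duality map of (ℝ³, ‖·‖₃), with J 0 = 0. -/
noncomputable def Jmap (z : ℝ × ℝ × ℝ) : ℝ × ℝ × ℝ :=
  if z = 0 then 0
  else (|z.1| ^ 2 * Real.sign z.1 / norm3 z,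
        |z.2.1| ^ 2 * Real.sign z.2.1 / norm3 z,
        |z.2.2| ^ 2 * Real.sign z.2.2 / norm3 z)

/-- The standard pairing (dot product) between ℝ³ and its dual. -/
def dot (a b : ℝ × ℝ × ℝ) : ℝ := a.1 * b.1 + a.2.1 * b.2.1 + a.2.2 * b.2.2

/-!
Both `u` and `v` lie in the plane `z₁ + z₂ + z₃ = 0`, hence so does the segment `[v, u]`.
`J z` is a positive multiple of `(z₁|z₁|, z₂|z₂|, z₃|z₃|)`, so `J z` can be a positive
multiple of `(-3, 2, 1)` only for `z` a positive multiple of `(-√3, √2, 1)`, and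
`√2 + 1 ≠ √3` puts that point off the plane. The remaining claims are direct computations.
-/

lemma abs_sq_mul_sign (x : ℝ) : |x| ^ 2 * Real.sign x = x * |x| := by
  rcases lt_trichotomy x 0 with hx | rfl | hx
  · simp [Real.sign_of_neg hx, abs_of_neg hx, sq]
  · simp
  · simp [Real.sign_of_pos hx, abs_of_pos hx, sq]

lemma pos_of_mul_abs_self_pos {x : ℝ} (h : 0 < x * |x|) : 0 < x := by
  by_contra! hx
  exact h.not_ge (mul_nonpos_of_nonpos_of_nonneg hx (abs_nonneg x))

lemma norm3_pos {z : ℝ × ℝ × ℝ} (hz : z ≠ 0) : 0 < norm3 z := by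
  obtain ⟨x, y, w⟩ := z
  simp only [ne_eq, Prod.mk_eq_zero, not_and_or] at hz
  refine Real.rpow_pos_of_pos ?_ _
  rcases hz with hx | hy | hw <;> positivity

lemma Jmap_of_ne_zero {z : ℝ × ℝ × ℝ} (hz : z ≠ 0) :
    Jmap z = (norm3 z)⁻¹ • (z.1 * |z.1|, z.2.1 * |z.2.1|, z.2.2 * |z.2.2|) := by
  simp only [Jmap, if_neg hz, abs_sq_mul_sign, Prod.smul_mk, smul_eq_mul, inv_mul_eq_div]

lemma segment_subset_sum_eq_zero {v u : ℝ × ℝ × ℝ} (hv : v.1 + v.2.1 + v.2.2 = 0)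
    (hu : u.1 + u.2.1 + u.2.2 = 0) :
    segment ℝ v u ⊆ {z : ℝ × ℝ × ℝ | z.1 + z.2.1 + z.2.2 = 0} :=
  (convex_hyperplane ⟨fun _ _ => by simp only [Prod.fst_add, Prod.snd_add]; ring,
    fun _ _ => by simp only [Prod.smul_fst, Prod.smul_snd, smul_eq_mul]; ring⟩ 0).segment_subset
    hv hu

lemma Jmap_ne_smul_of_sum_eq_zero {z : ℝ × ℝ × ℝ} (hz : z.1 + z.2.1 + z.2.2 = 0) {κ : ℝ}
    (hκ : 0 < κ) : Jmap z ≠ κ • ((-3 : ℝ), (2 : ℝ), (1 : ℝ)) := by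
  intro h
  have hz0 : z ≠ 0 := by
    rintro rfl
    rw [Jmap, if_pos rfl] at h
    exact smul_ne_zero hκ.ne' (by simp) h.symm
  rw [Jmap_of_ne_zero hz0] at h
  obtain ⟨x, y, w⟩ := z
  simp only [Prod.smul_mk, Prod.mk.injEq, smul_eq_mul] at h hz
  obtain ⟨hx, hy, hw⟩ := h
  have hN := norm3_pos hz0
  set N := norm3 (x, y, w)
  have hy' : y * |y| = 2 * κ * N := by field_simp at hy; linarith
  have hw' : w * |w| = κ * N := by field_simp at hw; linarith
  have hx' : x * |x| = -3 * κ * N := by field_simp at hx; linarith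
  have hy0 : 0 < y := pos_of_mul_abs_self_pos (by rw [hy']; positivity)
  have hw0 : 0 < w := pos_of_mul_abs_self_pos (by rw [hw']; positivity)
  rw [abs_of_pos hy0] at hy'
  rw [abs_of_pos hw0] at hw'
  rw [show x = -(y + w) by linarith, abs_neg, abs_of_pos (by positivity)] at hx'
  -- `(y + w)² = 3κN = y² + w²` forces `y w = 0`
  nlinarith [mul_pos hy0 hw0]

/-- ψ = (1/4)Ju + (3/4)Jv is not in J([v,u]); hence J([v,u]) is not
the segment [Jv, Ju]. -/
theorem stmt5 :
    let u : ℝ × ℝ × ℝ := (0, -1, 1)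
    let v : ℝ × ℝ × ℝ := (-1, 1, 0)
    let ψ : ℝ × ℝ × ℝ := (1 / 4 : ℝ) • Jmap u + (3 / 4 : ℝ) • Jmap v
    Jmap u = (((2 : ℝ) ^ ((1 : ℝ) / 3))⁻¹) • ((0 : ℝ), (-1 : ℝ), (1 : ℝ)) ∧
    Jmap v = (((2 : ℝ) ^ ((1 : ℝ) / 3))⁻¹) • ((-1 : ℝ), (1 : ℝ), (0 : ℝ)) ∧
    ψ = ((4 * (2 : ℝ) ^ ((1 : ℝ) / 3))⁻¹) • ((-3 : ℝ), (2 : ℝ), (1 : ℝ)) ∧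
    ψ ∉ Jmap '' segment ℝ v u ∧
    Jmap '' segment ℝ v u ≠ segment ℝ (Jmap v) (Jmap u) := by
  intro u v ψ
  have hJu : Jmap u = ((2 : ℝ) ^ ((1 : ℝ) / 3))⁻¹ • u := by
    rw [Jmap_of_ne_zero (by simp [u])]
    norm_num [u, norm3]
  have hJv : Jmap v = ((2 : ℝ) ^ ((1 : ℝ) / 3))⁻¹ • v := by
    rw [Jmap_of_ne_zero (by simp [v])]
    norm_num [v, norm3]
  have hψ : ψ = ((4 * (2 : ℝ) ^ ((1 : ℝ) / 3))⁻¹) • ((-3 : ℝ), (2 : ℝ), (1 : ℝ)) := by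
    simp only [ψ, hJu, hJv, u, v, Prod.smul_mk, Prod.mk_add_mk, smul_eq_mul, Prod.mk.injEq]
    refine ⟨?_, ?_, ?_⟩ <;> ring
  have hψ_notMem : ψ ∉ Jmap '' segment ℝ v u := by
    rintro ⟨z, hz, hJz⟩
    refine Jmap_ne_smul_of_sum_eq_zero ?_ (by positivity) (hJz.trans hψ)
    exact segment_subset_sum_eq_zero (by norm_num [v]) (by norm_num [u]) hz
  refine ⟨hJu, hJv, hψ, hψ_notMem, fun h => hψ_notMem (h ▸ ?_)⟩
  exact ⟨3 / 4, 1 / 4, by norm_num, by norm_num, by norm_num, add_comm _ _⟩
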